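/- arXiv:2310.05781 — 5 statements merged into one kernel-verified Lean document; each statement's English description precedes it below -/
import Mathlib

section
/- Let λ < 0, φ : H → ℝ ∪ {+∞} proper, elements T̄₁,…,T̄_N ∈ H with c_λ(ϑ, T̄ᵢ) ∈ ℝ for all ϑ ∈ dom φ, and weights ρᵢ ≥ 0 summing to 1. Then for all ϑ ∈ dom φ, φ(ϑ) − Σᵢ ρᵢ c_λ(ϑ, T̄ᵢ) ≤ φ(ϑ) − c_λ(ϑ, Σᵢ ρᵢ T̄ᵢ); moreover if ϑ* satisfies Σᵢ ρᵢ T̄ᵢ ∈ ∂^{c_λ}φ(ϑ*), then φ(ϑ*) − Σᵢ ρᵢ c_λ(ϑ*, T̄ᵢ) ≤ −φ^{c_λ}(Σᵢ ρᵢ T̄ᵢ). -/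
/-!
For `λ < 0` the map `x ↦ λ⁻¹ log (1 + λ x)` is convex on `{x | 0 < 1 + λ x}` (concavity of `log`
composed with an affine map, times a negative constant), so Jensen's inequality gives
`c_λ(ϑ, Σᵢ ρᵢ T̄ᵢ) ≤ Σᵢ ρᵢ c_λ(ϑ, T̄ᵢ)`, which is the first bound. At a `c_λ`-subgradient point the
Fenchel–Young equality `φ^{c_λ}(Σᵢ ρᵢ T̄ᵢ) = c_λ(ϑ*, Σᵢ ρᵢ T̄ᵢ) − φ(ϑ*)` turns the right-hand side of
the first bound into `−φ^{c_λ}(Σᵢ ρᵢ T̄ᵢ)`.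
-/

/-- The coupling `c_λ(u,v)`. -/
noncomputable def clam {H : Type*} [NormedAddCommGroup H] [InnerProductSpace ℝ H]
    (lam : ℝ) (u v : H) : EReal :=
  if lam = 0 then ((inner ℝ u v : ℝ) : EReal)
  else if 0 < 1 + lam * (inner ℝ u v : ℝ) then
    ((lam⁻¹ * Real.log (1 + lam * (inner ℝ u v : ℝ)) : ℝ) : EReal)
  else ⊥

/-- The `c_λ`-conjugate. -/
noncomputable def clamConj {H : Type*} [NormedAddCommGroup H] [InnerProductSpace ℝ H]
    (lam : ℝ) (f : H → EReal) (v : H) : EReal :=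
  ⨆ u, clam lam u v - f u

open Finset Real
open scoped InnerProductSpace

lemma EReal.coe_finset_sum {ι : Type*} (s : Finset ι) (f : ι → ℝ) :
    ((∑ i ∈ s, f i : ℝ) : EReal) = ∑ i ∈ s, (f i : EReal) :=
  map_sum (⟨⟨Real.toEReal, EReal.coe_zero⟩, EReal.coe_add⟩ : ℝ →+ EReal) f s

section Coupling

variable {H : Type*} [NormedAddCommGroup H] [InnerProductSpace ℝ H] {lam : ℝ} {u v : H}

lemma clam_of_ne_zero_of_pos (hlam : lam ≠ 0) (h : 0 < 1 + lam * ⟪u, v⟫_ℝ) :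
    clam lam u v = ((lam⁻¹ * log (1 + lam * ⟪u, v⟫_ℝ) : ℝ) : EReal) := by
  simp [clam, hlam, h]

lemma one_add_mul_inner_pos_of_clam_ne_bot (hlam : lam ≠ 0) (h : clam lam u v ≠ ⊥) :
    0 < 1 + lam * ⟪u, v⟫_ℝ := by
  by_contra hle
  simp [clam, hlam, hle] at h

theorem clam_sum_smul_le_sum_mul_clam {ι : Type*} {s : Finset ι} {ρ : ι → ℝ} {T : ι → H}
    (hlam : lam < 0) (hρ : ∀ i ∈ s, 0 ≤ ρ i) (hsum : ∑ i ∈ s, ρ i = 1)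
    (hT : ∀ i ∈ s, clam lam u (T i) ≠ ⊥) :
    clam lam u (∑ i ∈ s, ρ i • T i) ≤ ∑ i ∈ s, (ρ i : EReal) * clam lam u (T i) := by
  have hpos : ∀ i ∈ s, 0 < 1 + lam * ⟪u, T i⟫_ℝ := fun i hi =>
    one_add_mul_inner_pos_of_clam_ne_bot hlam.ne (hT i hi)
  have hcomb : 1 + lam * ⟪u, ∑ i ∈ s, ρ i • T i⟫_ℝ
      = ∑ i ∈ s, ρ i • (1 + lam * ⟪u, T i⟫_ℝ) := by
    simp only [inner_sum, real_inner_smul_right, smul_eq_mul, mul_add, mul_one, sum_add_distrib,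
      hsum, mul_sum]
    congr 1
    exact sum_congr rfl fun i _ => by ring
  have hsum_pos : 0 < 1 + lam * ⟪u, ∑ i ∈ s, ρ i • T i⟫_ℝ :=
    hcomb ▸ (convex_Ioi (0 : ℝ)).sum_mem hρ hsum hpos
  have jensen : ∑ i ∈ s, ρ i • log (1 + lam * ⟪u, T i⟫_ℝ)
      ≤ log (1 + lam * ⟪u, ∑ i ∈ s, ρ i • T i⟫_ℝ) :=
    hcomb ▸ strictConcaveOn_log_Ioi.concaveOn.le_map_sum hρ hsum hpos
  have hterms : ∑ i ∈ s, (ρ i : EReal) * clam lam u (T i)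
      = ∑ i ∈ s, ((ρ i * (lam⁻¹ * log (1 + lam * ⟪u, T i⟫_ℝ)) : ℝ) : EReal) :=
    sum_congr rfl fun i hi => by rw [clam_of_ne_zero_of_pos hlam.ne (hpos i hi), ← EReal.coe_mul]
  rw [clam_of_ne_zero_of_pos hlam.ne hsum_pos, hterms, ← EReal.coe_finset_sum,
    EReal.coe_le_coe_iff]
  calc lam⁻¹ * log (1 + lam * ⟪u, ∑ i ∈ s, ρ i • T i⟫_ℝ)
      ≤ lam⁻¹ * ∑ i ∈ s, ρ i • log (1 + lam * ⟪u, T i⟫_ℝ) :=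
        mul_le_mul_of_nonpos_left jensen (inv_nonpos.mpr hlam.le)
    _ = ∑ i ∈ s, ρ i * (lam⁻¹ * log (1 + lam * ⟪u, T i⟫_ℝ)) := by
        rw [mul_sum]
        exact sum_congr rfl fun i _ => by rw [smul_eq_mul]; ring

end Coupling

/-- Case `λ < 0` of Proposition 6: the averaged coupling upper bound, and the bound
`φ(ϑ*) − Σᵢ ρᵢ c_λ(ϑ*, T̄ᵢ) ≤ −φ^{c_λ}(Σᵢ ρᵢ T̄ᵢ)` at a `c_λ`-subgradient point `ϑ*`. -/
theorem averaged_coupling_bounds_neg {H : Type*} [NormedAddCommGroup H]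
    [InnerProductSpace ℝ H] (lam : ℝ) (hlam : lam < 0)
    (φ : H → EReal) (hbot : ∀ w, φ w ≠ ⊥)
    (N : ℕ) (T : Fin N → H) (ρ : Fin N → ℝ)
    (hρ : ∀ i, 0 ≤ ρ i) (hsum : ∑ i, ρ i = 1)
    (hfin : ∀ ϑ, φ ϑ ≠ ⊤ → ∀ i, clam lam ϑ (T i) ≠ ⊥) :
    (∀ ϑ, φ ϑ ≠ ⊤ →
      φ ϑ - ∑ i, ((ρ i : EReal) * clam lam ϑ (T i))
        ≤ φ ϑ - clam lam ϑ (∑ i, ρ i • T i))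
    ∧ (∀ ϑs : H, φ ϑs ≠ ⊤ →
        clamConj lam φ (∑ i, ρ i • T i) + φ ϑs = clam lam ϑs (∑ i, ρ i • T i) →
        φ ϑs - ∑ i, ((ρ i : EReal) * clam lam ϑs (T i))
          ≤ - clamConj lam φ (∑ i, ρ i • T i)) := by
  have averaged_bound : ∀ ϑ, φ ϑ ≠ ⊤ →
      φ ϑ - ∑ i, ((ρ i : EReal) * clam lam ϑ (T i)) ≤ φ ϑ - clam lam ϑ (∑ i, ρ i • T i) :=
    fun ϑ hϑ => EReal.sub_le_sub le_rfl <|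
      clam_sum_smul_le_sum_mul_clam hlam (fun i _ => hρ i) hsum (fun i _ => hfin ϑ hϑ i)
  refine ⟨averaged_bound, fun ϑs hϑs hsubgrad => ?_⟩
  calc φ ϑs - ∑ i, ((ρ i : EReal) * clam lam ϑs (T i))
      ≤ φ ϑs - clam lam ϑs (∑ i, ρ i • T i) := averaged_bound ϑs hϑs
    _ = - clamConj lam φ (∑ i, ρ i • T i) := by
        rw [← hsubgrad, ← EReal.coe_toReal hϑs (hbot ϑs), EReal.sub_add_cancel_right]
end

section
/- Let q_ϑ(x) = exp(c_λ(ϑ, T(x)) − φ_λ(ϑ)) be a member of the λ-exponential family with α = 1 − λ > 0, and let p be a probability density. Then the Rényi divergence satisfies RD_α(p, q_ϑ) = φ_λ(ϑ) − c_λ(ϑ, p^{(α)}_{|S_ϑ}(T)) − H_α(p_{|S_ϑ}), where p_{|S_ϑ} is the restriction of p to the support S_ϑ of q_ϑ, p^{(α)} denotes the escort with exponent α, and H_α is the Rényi entropy. -/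
/-!
On the support `S_ϑ` the density `q_ϑ` is `exp (-φ) * (1 + λ⟪ϑ, T⟫) ^ (1/λ)`, so with
`1 - α = λ` the factor `q_ϑ ^ (1 - α)` collapses to `exp (-λφ) * (1 + λ⟪ϑ, T⟫)`, which is
affine in `T`. Off `S_ϑ` both `q_ϑ` and `p_{|S_ϑ}` vanish. Hence
`∫ p_{|S_ϑ}^α q_ϑ^(1-α) = exp (-λφ) * (∫ p_{|S_ϑ}^α) * (1 + λ⟪ϑ, η⟫)` with `η` the escort
moment, and taking logarithms gives the three terms of the formula.
-/

open MeasureTheory Real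

section EscortMean

variable {X : Type*} [MeasurableSpace X] {H : Type*} [NormedAddCommGroup H]
  [InnerProductSpace ℝ H]

/-- The escort moment `p^{(α)}(T)` of the paper is `escortMean m (p ^ α) T`. -/
noncomputable def escortMean (m : Measure X) (w : X → ℝ) (T : X → H) : H :=
  (∫ x, w x ∂m)⁻¹ • ∫ x, w x • T x ∂m

theorem mul_one_add_inner_eq (a lam : ℝ) (ϑ t : H) :
    a * (1 + lam * inner ℝ ϑ t) = a + lam * inner ℝ ϑ (a • t) := by
  rw [real_inner_smul_right]; ring

variable {m : Measure X} {w : X → ℝ}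

theorem integrable_mul_one_add_inner (T : X → H) (ϑ : H) (lam : ℝ) (hw : Integrable w m)
    (hwT : Integrable (fun x => w x • T x) m) :
    Integrable (fun x => w x * (1 + lam * inner ℝ ϑ (T x))) m := by
  simp_rw [mul_one_add_inner_eq]
  exact hw.add ((hwT.const_inner ϑ).const_mul lam)

variable [CompleteSpace H]

theorem integral_mul_one_add_inner (T : X → H) (ϑ : H) (lam : ℝ) (hw : Integrable w m)
    (hwT : Integrable (fun x => w x • T x) m) (hw0 : ∫ x, w x ∂m ≠ 0) :
    ∫ x, w x * (1 + lam * inner ℝ ϑ (T x)) ∂m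
      = (∫ x, w x ∂m) * (1 + lam * inner ℝ ϑ (escortMean m w T)) := by
  simp_rw [mul_one_add_inner_eq, escortMean, smul_inv_smul₀ hw0]
  rw [integral_add hw ((hwT.const_inner ϑ).const_mul lam), integral_const_mul,
    integral_inner hwT]

end EscortMean

theorem integral_mul_pos_of_pos_on_support {X : Type*} [MeasurableSpace X] {m : Measure X}
    {w u : X → ℝ} (hw : 0 ≤ w) (hu : ∀ x, w x ≠ 0 → 0 < u x) (hwi : Integrable w m)
    (hwui : Integrable (fun x => w x * u x) m) (hpos : 0 < ∫ x, w x ∂m) :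
    0 < ∫ x, w x * u x ∂m := by
  have hwu : 0 ≤ fun x => w x * u x := fun x => by
    by_cases hx : w x = 0
    · simp [hx]
    · exact mul_nonneg (hw x) (hu x hx).le
  have hsupport : Function.support (fun x => w x * u x) = Function.support w := by
    ext x
    simp only [Function.mem_support, mul_ne_zero_iff, and_iff_left_iff_imp]
    exact fun hx => (hu x hx).ne'
  rwa [integral_pos_iff_support_of_nonneg hwu hwui, hsupport,
    ← integral_pos_iff_support_of_nonneg hw hwi]

theorem Real.exp_inv_mul_log_rpow {lam u : ℝ} (hlam : lam ≠ 0) (hu : 0 < u) :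
    exp (lam⁻¹ * log u) ^ lam = u := by
  rw [← exp_mul, show lam⁻¹ * log u * lam = log u by field_simp, exp_log hu]

theorem rpow_mul_rpow_eq_exp_mul_of_support {a b u φ lam α : ℝ} (hlam : lam ≠ 0) (hα : 0 < α)
    (hb : 0 < u → b = exp (-φ) * exp (lam⁻¹ * log u)) (ha : ¬ 0 < u → a = 0) :
    a ^ α * b ^ lam = exp (-lam * φ) * (a ^ α * u) := by
  by_cases hu : 0 < u
  · rw [hb hu, mul_rpow (exp_pos _).le (exp_pos _).le, exp_inv_mul_log_rpow hlam hu,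
      ← exp_mul]
    ring_nf
  · rw [ha hu, zero_rpow hα.ne']
    ring

theorem renyi_divergence_rewriting_general {X : Type*} [MeasurableSpace X] (m : Measure X)
    {H : Type*} [NormedAddCommGroup H] [InnerProductSpace ℝ H] [FiniteDimensional ℝ H]
    (T : X → H) (ϑ : H) (lam α : ℝ) (hlam : lam ≠ 0) (hα : 0 < α) (hal : α = 1 - lam)
    -- the target probability density
    (p : X → ℝ) (hp0 : ∀ x, 0 ≤ p x)
    -- the unnormalized density of the family member, with `exp(-∞) = 0` outside `S_ϑ`
    (f : X → ℝ)
    (hf : ∀ x, f x = if 0 < 1 + lam * (inner ℝ ϑ (T x) : ℝ) then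
        Real.exp (lam⁻¹ * Real.log (1 + lam * (inner ℝ ϑ (T x) : ℝ))) else 0)
    -- the λ-log-partition value and the normalized density q_ϑ
    (φ : ℝ)
    (q : X → ℝ) (hq : ∀ x, q x = Real.exp (-φ) * f x)
    -- the restriction of p to the support S_ϑ of q_ϑ
    (pS : X → ℝ)
    (hpS : ∀ x, pS x = if 0 < 1 + lam * (inner ℝ ϑ (T x) : ℝ) then p x else 0)
    -- compatibility of p with q_ϑ
    (hint : Integrable (fun x => pS x ^ α) m) (hpos : 0 < ∫ x, pS x ^ α ∂m)
    (hintT : Integrable (fun x => (pS x ^ α) • T x) m)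
    -- the escort moment of the restricted density
    (η : H) (hη : η = (∫ x, pS x ^ α ∂m)⁻¹ • ∫ x, (pS x ^ α) • T x ∂m) :
    (α - 1)⁻¹ * Real.log (∫ x, pS x ^ α * q x ^ (1 - α) ∂m)
      = φ - lam⁻¹ * Real.log (1 + lam * (inner ℝ ϑ η : ℝ))
        - (1 - α)⁻¹ * Real.log (∫ x, pS x ^ α ∂m) := by
  set C := ∫ x, pS x ^ α ∂m
  set K := 1 + lam * inner ℝ ϑ η
  have hlam' : 1 - α = lam := by rw [hal]; ring
  have hpointwise : ∀ x, pS x ^ α * q x ^ lam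
      = exp (-lam * φ) * (pS x ^ α * (1 + lam * inner ℝ ϑ (T x))) := fun x =>
    rpow_mul_rpow_eq_exp_mul_of_support hlam hα (fun hx => by rw [hq, hf, if_pos hx])
      (fun hx => by rw [hpS, if_neg hx])
  have hpS0 : ∀ x, 0 ≤ pS x := fun x => by rw [hpS]; split_ifs <;> simp [hp0]
  have hS : ∀ x, pS x ^ α ≠ 0 → 0 < 1 + lam * inner ℝ ϑ (T x) := fun x hx => by
    by_contra hout
    exact hx (by rw [hpS, if_neg hout, zero_rpow hα.ne'])
  have hmoment : ∫ x, pS x ^ α * (1 + lam * inner ℝ ϑ (T x)) ∂m = C * K := by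
    subst hη; exact integral_mul_one_add_inner T ϑ lam hint hintT hpos.ne'
  have hK : 0 < K := by
    refine pos_of_mul_pos_right (hmoment ▸ ?_) hpos.le
    exact integral_mul_pos_of_pos_on_support (fun x => rpow_nonneg (hpS0 x) α) hS hint
      (integrable_mul_one_add_inner T ϑ lam hint hintT) hpos
  rw [hlam', integral_congr_ae (ae_of_all _ hpointwise), integral_const_mul, hmoment,
    log_mul (exp_pos _).ne' (mul_pos hpos hK).ne', log_exp, log_mul hpos.ne' hK.ne',
    show α - 1 = -lam by linarith]
  field_simp
  ring

/-- Proposition 1, Equation (18): for a member `q_ϑ` of the `λ`-exponential family with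
`α = 1 − λ > 0` and a compatible density `p`,
`RD_α(p, q_ϑ) = φ_λ(ϑ) − c_λ(ϑ, p^{(α)}_{|S_ϑ}(T)) − H_α(p_{|S_ϑ})`. -/
theorem renyi_divergence_rewriting {X : Type*} [MeasurableSpace X] (m : Measure X)
    {H : Type*} [NormedAddCommGroup H] [InnerProductSpace ℝ H] [FiniteDimensional ℝ H]
    (T : X → H) (ϑ : H) (lam α : ℝ) (hlam : lam ≠ 0) (hα : 0 < α) (hal : α = 1 - lam)
    -- the target probability density
    (p : X → ℝ) (hp0 : ∀ x, 0 ≤ p x) (hp1 : ∫ x, p x ∂m = 1)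
    -- the unnormalized density of the family member, with `exp(-∞) = 0` outside `S_ϑ`
    (f : X → ℝ)
    (hf : ∀ x, f x = if 0 < 1 + lam * (inner ℝ ϑ (T x) : ℝ) then
        Real.exp (lam⁻¹ * Real.log (1 + lam * (inner ℝ ϑ (T x) : ℝ))) else 0)
    (hfint : Integrable f m) (hfpos : 0 < ∫ x, f x ∂m)
    -- the λ-log-partition value and the normalized density q_ϑ
    (φ : ℝ) (hφ : φ = Real.log (∫ x, f x ∂m))
    (q : X → ℝ) (hq : ∀ x, q x = Real.exp (-φ) * f x)
    -- the restriction of p to the support S_ϑ of q_ϑ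
    (pS : X → ℝ)
    (hpS : ∀ x, pS x = if 0 < 1 + lam * (inner ℝ ϑ (T x) : ℝ) then p x else 0)
    -- compatibility of p with q_ϑ
    (hint : Integrable (fun x => pS x ^ α) m) (hpos : 0 < ∫ x, pS x ^ α ∂m)
    (hintT : Integrable (fun x => (pS x ^ α) • T x) m)
    -- the escort moment of the restricted density
    (η : H) (hη : η = (∫ x, pS x ^ α ∂m)⁻¹ • ∫ x, (pS x ^ α) • T x ∂m) :
    (α - 1)⁻¹ * Real.log (∫ x, pS x ^ α * q x ^ (1 - α) ∂m)
      = φ - lam⁻¹ * Real.log (1 + lam * (inner ℝ ϑ η : ℝ))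
        - (1 - α)⁻¹ * Real.log (∫ x, pS x ^ α ∂m) :=
  renyi_divergence_rewriting_general m T ϑ lam α hlam hα hal p hp0 f hf φ q hq pS hpS hint hpos
    hintT η hη
end

section
/- Under the hypotheses that φ_λ is proper, all densities q_ϑ in the λ-exponential family share a common support, and each q_ϑ is compatible with the family, the Rényi divergence between two members satisfies RD_α(q_{ϑ'}, q_ϑ) = φ_λ(ϑ) − φ_λ(ϑ') − c_λ(ϑ, q_{ϑ'}^{(α)}(T)) + c_λ(ϑ', q_{ϑ'}^{(α)}(T)), i.e. it is a generalized Bregman divergence induced by φ_λ under the coupling c_λ. -/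
open MeasureTheory Real

/-!
Write `g_ϑ = 1 + λ⟪ϑ, T⟫`. On the common support the defining formula gives
`q_ϑ ^ λ = exp (-λ φ_λ(ϑ)) · g_ϑ`, so the Rényi integrand `q_{ϑ'} ^ α q_ϑ ^ (1 - α)` is
`exp (-λ φ_λ(ϑ))` times the escort weight `q_{ϑ'} ^ α` tilted by the affine function `g_ϑ`.
Integrating an affine function of `T` against the escort weight `Z = ∫ q_{ϑ'} ^ α` gives
`Z · (1 + λ⟪ϑ, η'⟫)` with `η'` the escort moment, whence
`RD_α(q_{ϑ'}, q_ϑ) = φ_λ(ϑ) - λ⁻¹ log (1 + λ⟪ϑ, η'⟫) - λ⁻¹ log Z`.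
Taking `ϑ = ϑ'` and using `α + λ = 1` and `∫ q_{ϑ'} = 1` gives the Fenchel–Young equality
`-λ⁻¹ log Z = λ⁻¹ log (1 + λ⟪ϑ', η'⟫) - φ_λ(ϑ')` for the negative Rényi entropy, and
substituting it yields the Bregman form.
-/

namespace LambdaExponential

/-- `exp (c_λ(ϑ, T x))` as a function of `t = ⟪ϑ, T x⟫`, with the convention `exp (-∞) = 0`
off the domain `1 + λ t > 0` of `c_λ`. -/
noncomputable def weight (lam t : ℝ) : ℝ :=
  if 0 < 1 + lam * t then exp (lam⁻¹ * log (1 + lam * t)) else 0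

lemma weight_of_not_pos {lam t : ℝ} (h : ¬ 0 < 1 + lam * t) : weight lam t = 0 := if_neg h

lemma weight_nonneg (lam t : ℝ) : 0 ≤ weight lam t := by
  unfold weight
  split_ifs
  exacts [(exp_pos _).le, le_rfl]

lemma exp_neg_mul_weight_rpow {lam t : ℝ} (hlam : lam ≠ 0) (φ : ℝ) (h : 0 < 1 + lam * t) :
    (exp (-φ) * weight lam t) ^ lam = exp (-(lam * φ)) * (1 + lam * t) := by
  rw [weight, if_pos h, ← exp_add, ← exp_mul]
  conv_rhs => rw [← exp_log h, ← exp_add]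
  congr 1
  field_simp

lemma rpow_mul_exp_neg_mul_weight_rpow {lam α t p : ℝ} (hlam : lam ≠ 0) (hα : α ≠ 0) (φ : ℝ)
    (hp : ¬ 0 < 1 + lam * t → p = 0) :
    p ^ α * (exp (-φ) * weight lam t) ^ lam = exp (-(lam * φ)) * (p ^ α * (1 + lam * t)) := by
  by_cases h : 0 < 1 + lam * t
  · rw [exp_neg_mul_weight_rpow hlam φ h]
    ring
  · rw [hp h, zero_rpow hα]
    ring

lemma exp_neg_mul_weight_rpow_mul {lam α t : ℝ} (hlam : lam ≠ 0) (hα : α ≠ 0)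
    (hαlam : α + lam = 1) (φ : ℝ) :
    (exp (-φ) * weight lam t) ^ α * (1 + lam * t) = exp (lam * φ) * (exp (-φ) * weight lam t) := by
  have hp : ¬ 0 < 1 + lam * t → exp (-φ) * weight lam t = 0 := fun h => by
    rw [weight_of_not_pos h, mul_zero]
  have htilt := rpow_mul_exp_neg_mul_weight_rpow hlam hα φ hp
  rw [← rpow_add' (mul_nonneg (exp_pos _).le (weight_nonneg _ _)) (hαlam ▸ one_ne_zero), hαlam,
    rpow_one] at htilt
  calc _ = exp (lam * φ) * (exp (-(lam * φ))
          * ((exp (-φ) * weight lam t) ^ α * (1 + lam * t))) := by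
        rw [← mul_assoc, ← exp_add, add_neg_cancel, exp_zero, one_mul]
    _ = _ := by rw [← htilt]

variable {X : Type*} [MeasurableSpace X] {m : Measure X}
  {H : Type*} [NormedAddCommGroup H] [InnerProductSpace ℝ H]

lemma mul_one_add_inner_eq (w : ℝ) (lam : ℝ) (c v : H) :
    w * (1 + lam * inner ℝ c v) = w + lam * inner ℝ c (w • v) := by
  rw [real_inner_smul_right]
  ring

lemma integrable_mul_one_add_inner {w : X → ℝ} {T : X → H} (hw : Integrable w m)
    (hwT : Integrable (fun x => w x • T x) m) (lam : ℝ) (c : H) :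
    Integrable (fun x => w x * (1 + lam * inner ℝ c (T x))) m := by
  simp_rw [mul_one_add_inner_eq]
  exact hw.add ((hwT.const_inner c).const_mul lam)

lemma integral_mul_one_add_inner [CompleteSpace H] {w : X → ℝ} {T : X → H}
    (hw : Integrable w m) (hwT : Integrable (fun x => w x • T x) m) (hne : ∫ x, w x ∂m ≠ 0)
    (lam : ℝ) (c : H) :
    ∫ x, w x * (1 + lam * inner ℝ c (T x)) ∂m
      = (∫ x, w x ∂m) * (1 + lam * inner ℝ c ((∫ x, w x ∂m)⁻¹ • ∫ x, w x • T x ∂m)) := by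
  conv_lhs => simp only [mul_one_add_inner_eq]
  rw [integral_add hw ((hwT.const_inner c).const_mul lam), integral_const_mul,
    integral_inner hwT c, real_inner_smul_right]
  field_simp

lemma integral_mul_pos {w g : X → ℝ} (hw : 0 ≤ w) (hwi : Integrable w m)
    (hwg : Integrable (fun x => w x * g x) m) (hg : ∀ x, w x ≠ 0 → 0 < g x)
    (hpos : 0 < ∫ x, w x ∂m) : 0 < ∫ x, w x * g x ∂m := by
  have hwg_nonneg : 0 ≤ fun x => w x * g x := fun x => by
    by_cases hx : w x = 0
    · simp [hx]
    · exact mul_nonneg (hw x) (hg x hx).le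
  rw [integral_pos_iff_support_of_nonneg hw hwi] at hpos
  rw [integral_pos_iff_support_of_nonneg hwg_nonneg hwg]
  exact hpos.trans_le (measure_mono fun x hx => mul_ne_zero hx (hg x hx).ne')

/-- The Fenchel–Young equality `Z · B = exp (λ φ')` eliminates the escort normalizer `Z`. -/
lemma bregman_form_of_fenchel_young {lam α φ φ' Z A B : ℝ} (hlam : lam ≠ 0)
    (hα : α - 1 = -lam) (hZ : 0 < Z) (hZA : 0 < Z * A) (hZB : Z * B = exp (lam * φ')) :
    (α - 1)⁻¹ * log (exp (-(lam * φ)) * (Z * A))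
      = φ - φ' - lam⁻¹ * log A + lam⁻¹ * log B := by
  have hA : 0 < A := pos_of_mul_pos_right hZA hZ.le
  have hB : 0 < B := pos_of_mul_pos_right (hZB ▸ exp_pos _) hZ.le
  have hlog := congrArg log hZB
  rw [log_mul hZ.ne' hB.ne', log_exp] at hlog
  rw [log_mul (exp_ne_zero _) hZA.ne', log_exp, log_mul hZ.ne' hA.ne', hα]
  field_simp
  linear_combination -hlog

end LambdaExponential

open LambdaExponential

theorem renyi_divergence_bregman_form_general {X : Type*} [MeasurableSpace X] (m : Measure X)
    {H : Type*} [NormedAddCommGroup H] [InnerProductSpace ℝ H] [FiniteDimensional ℝ H]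
    (T : X → H) (ϑ ϑ' : H) (lam α : ℝ) (hlam : lam ≠ 0) (hα : 0 < α) (hal : α = 1 - lam)
    -- unnormalized densities with convention `exp(-∞) = 0`
    (f f' : X → ℝ)
    (hf : ∀ x, f x = if 0 < 1 + lam * (inner ℝ ϑ (T x) : ℝ) then
        Real.exp (lam⁻¹ * Real.log (1 + lam * (inner ℝ ϑ (T x) : ℝ))) else 0)
    (hf' : ∀ x, f' x = if 0 < 1 + lam * (inner ℝ ϑ' (T x) : ℝ) then
        Real.exp (lam⁻¹ * Real.log (1 + lam * (inner ℝ ϑ' (T x) : ℝ))) else 0)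
    -- properness of the λ-log-partition at ϑ and ϑ'
    (hfpos' : 0 < ∫ x, f' x ∂m)
    (φϑ φϑ' : ℝ) (hφϑ' : φϑ' = Real.log (∫ x, f' x ∂m))
    (q q' : X → ℝ) (hq : ∀ x, q x = Real.exp (-φϑ) * f x)
    (hq' : ∀ x, q' x = Real.exp (-φϑ') * f' x)
    -- common support condition
    (hsupp : ∀ x, (0 < 1 + lam * (inner ℝ ϑ (T x) : ℝ)) ↔ (0 < 1 + lam * (inner ℝ ϑ' (T x) : ℝ)))
    -- compatibility of q_{ϑ'} with the family
    (hint : Integrable (fun x => q' x ^ α) m) (hpos : 0 < ∫ x, q' x ^ α ∂m)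
    (hintT : Integrable (fun x => (q' x ^ α) • T x) m)
    -- escort moment of q_{ϑ'}
    (η' : H) (hη' : η' = (∫ x, q' x ^ α ∂m)⁻¹ • ∫ x, (q' x ^ α) • T x ∂m) :
    (α - 1)⁻¹ * Real.log (∫ x, q' x ^ α * q x ^ (1 - α) ∂m)
      = φϑ - φϑ' - lam⁻¹ * Real.log (1 + lam * (inner ℝ ϑ η' : ℝ))
        + lam⁻¹ * Real.log (1 + lam * (inner ℝ ϑ' η' : ℝ)) := by
  have hα0 : α ≠ 0 := hα.ne'
  have hlamα : 1 - α = lam := by rw [hal]; ring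
  have hq_eq : ∀ x, q x = exp (-φϑ) * weight lam (inner ℝ ϑ (T x)) := fun x => by
    rw [hq x, hf x]; rfl
  have hq'_eq : ∀ x, q' x = exp (-φϑ') * weight lam (inner ℝ ϑ' (T x)) := fun x => by
    rw [hq' x, hf' x]; rfl
  have hq'_supp : ∀ x, ¬ 0 < 1 + lam * inner ℝ ϑ (T x) → q' x = 0 := fun x h => by
    rw [hq'_eq x, weight_of_not_pos (mt (hsupp x).mpr h), mul_zero]
  have hq'_nonneg : ∀ x, 0 ≤ q' x := fun x => by
    rw [hq'_eq x]; exact mul_nonneg (exp_pos _).le (weight_nonneg _ _)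
  have hnormalized : ∫ x, q' x ∂m = 1 := by
    simp_rw [hq', integral_const_mul, hφϑ', exp_neg, exp_log hfpos', inv_mul_cancel₀ hfpos'.ne']
  have hescort := integral_mul_one_add_inner hint hintT hpos.ne' lam
  rw [← hη'] at hescort
  have hself : ∀ x, q' x ^ α * (1 + lam * inner ℝ ϑ' (T x)) = exp (lam * φϑ') * q' x := fun x => by
    rw [hq'_eq x]
    exact exp_neg_mul_weight_rpow_mul hlam hα0 (by rw [hal]; ring) φϑ'
  have hfenchel_young : (∫ x, q' x ^ α ∂m) * (1 + lam * inner ℝ ϑ' η') = exp (lam * φϑ') := by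
    rw [← hescort ϑ']
    simp_rw [hself, integral_const_mul, hnormalized, mul_one]
  have hrenyi : ∫ x, q' x ^ α * q x ^ (1 - α) ∂m
      = exp (-(lam * φϑ)) * ((∫ x, q' x ^ α ∂m) * (1 + lam * inner ℝ ϑ η')) := by
    simp_rw [hlamα, hq_eq, rpow_mul_exp_neg_mul_weight_rpow hlam hα0 φϑ (hq'_supp _),
      integral_const_mul, hescort]
  have htilted_pos : 0 < (∫ x, q' x ^ α ∂m) * (1 + lam * inner ℝ ϑ η') := by
    rw [← hescort ϑ]
    refine integral_mul_pos (fun x => rpow_nonneg (hq'_nonneg x) α) hint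
      (integrable_mul_one_add_inner hint hintT lam ϑ) (fun x hx => ?_) hpos
    by_contra h
    exact hx (by rw [hq'_supp x h, zero_rpow hα0])
  rw [hrenyi]
  exact bregman_form_of_fenchel_young hlam (by linarith) hpos htilted_pos hfenchel_young

/-- The Rényi divergence between two members of the `λ`-exponential family is the
generalized Bregman divergence induced by `φ_λ` under the coupling `c_λ`:
`RD_α(q_{ϑ'}, q_ϑ) = φ_λ(ϑ) − φ_λ(ϑ') − c_λ(ϑ, q_{ϑ'}^{(α)}(T)) + c_λ(ϑ', q_{ϑ'}^{(α)}(T))`. -/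
theorem renyi_divergence_bregman_form {X : Type*} [MeasurableSpace X] (m : Measure X)
    {H : Type*} [NormedAddCommGroup H] [InnerProductSpace ℝ H] [FiniteDimensional ℝ H]
    (T : X → H) (ϑ ϑ' : H) (lam α : ℝ) (hlam : lam ≠ 0) (hα : 0 < α) (hal : α = 1 - lam)
    -- unnormalized densities with convention `exp(-∞) = 0`
    (f f' : X → ℝ)
    (hf : ∀ x, f x = if 0 < 1 + lam * (inner ℝ ϑ (T x) : ℝ) then
        Real.exp (lam⁻¹ * Real.log (1 + lam * (inner ℝ ϑ (T x) : ℝ))) else 0)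
    (hf' : ∀ x, f' x = if 0 < 1 + lam * (inner ℝ ϑ' (T x) : ℝ) then
        Real.exp (lam⁻¹ * Real.log (1 + lam * (inner ℝ ϑ' (T x) : ℝ))) else 0)
    -- properness of the λ-log-partition at ϑ and ϑ'
    (hfint : Integrable f m) (hfpos : 0 < ∫ x, f x ∂m)
    (hfint' : Integrable f' m) (hfpos' : 0 < ∫ x, f' x ∂m)
    (φϑ φϑ' : ℝ) (hφϑ : φϑ = Real.log (∫ x, f x ∂m)) (hφϑ' : φϑ' = Real.log (∫ x, f' x ∂m))
    (q q' : X → ℝ) (hq : ∀ x, q x = Real.exp (-φϑ) * f x)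
    (hq' : ∀ x, q' x = Real.exp (-φϑ') * f' x)
    -- common support condition
    (hsupp : ∀ x, (0 < 1 + lam * (inner ℝ ϑ (T x) : ℝ)) ↔ (0 < 1 + lam * (inner ℝ ϑ' (T x) : ℝ)))
    -- compatibility of q_{ϑ'} with the family
    (hint : Integrable (fun x => q' x ^ α) m) (hpos : 0 < ∫ x, q' x ^ α ∂m)
    (hintT : Integrable (fun x => (q' x ^ α) • T x) m)
    -- escort moment of q_{ϑ'}
    (η' : H) (hη' : η' = (∫ x, q' x ^ α ∂m)⁻¹ • ∫ x, (q' x ^ α) • T x ∂m) :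
    (α - 1)⁻¹ * Real.log (∫ x, q' x ^ α * q x ^ (1 - α) ∂m)
      = φϑ - φϑ' - lam⁻¹ * Real.log (1 + lam * (inner ℝ ϑ η' : ℝ))
        + lam⁻¹ * Real.log (1 + lam * (inner ℝ ϑ' η' : ℝ)) :=
  renyi_divergence_bregman_form_general m T ϑ ϑ' lam α hlam hα hal f f' hf hf' hfpos' φϑ φϑ' hφϑ' q
    q' hq hq' hsupp hint hpos hintT η' hη'
end

section
/- Let p be a d-dimensional Student density with ν_p > 0 degrees of freedom, location μ_p and positive-definite shape Σ_p, and let α = 1 + 2/(ν+d) for some ν > 0. Then the escort density p^{(α)} ∝ p^α is again a Student density with degrees of freedom ν^{(α)} = ν_p + 2(ν_p+d)/(ν+d), location μ_p, and shape (ν_p/ν^{(α)}) Σ_p. -/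
open MeasureTheory Matrix

/-- The `d`-dimensional Student density with `ν` degrees of freedom, location `μ`
and shape matrix `S`, with normalizing constant
`Z_ν = Γ(ν/2) ν^{d/2} π^{d/2} / Γ((ν+d)/2)`. -/
noncomputable def studentDensity (d : ℕ) (ν : ℝ) (μ : Fin d → ℝ)
    (S : Matrix (Fin d) (Fin d) ℝ) (x : Fin d → ℝ) : ℝ :=
  (Real.Gamma ((ν + d) / 2) / (Real.Gamma (ν / 2) * ν ^ ((d : ℝ) / 2) * Real.pi ^ ((d : ℝ) / 2)))
    * S.det ^ (-(1 : ℝ) / 2)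
    * (1 + ν⁻¹ * ((x - μ) ⬝ᵥ S⁻¹.mulVec (x - μ))) ^ (-((ν + d) / 2))

open Set Real Module

/-!
Raising the Student density to the power `α = 1 + 2/(ν+d)` turns its exponent `-(νp+d)/2`
into `-(να+d)/2`, while the kernel `1 + νp⁻¹ (x-μ)ᵀ S⁻¹ (x-μ)` is unchanged when `νp, S` are
replaced by `να, (νp/να) S`. So `p^α` is a constant multiple of the Student density `q` with
these parameters, and normalizing it gives `q` itself because Student densities integrate to `1`.

That normalization reduces, by a shift and a factorization `Bᵀ B` of the quadratic form, to
`∫ (1 + |x|²)^(-s) dx = π^(d/2) Γ(s - d/2) / Γ(s)` over `ℝ^d`; in polar coordinates and after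
the substitution `t = r²/(1+r²)` this is a Beta integral.
-/

theorem integral_Ioo_rpow_mul_one_sub_rpow {u v : ℝ} (hu : 0 < u) (hv : 0 < v) :
    ∫ t in Ioo (0 : ℝ) 1, t ^ (u - 1) * (1 - t) ^ (v - 1) = Gamma u * Gamma v / Gamma (u + v) := by
  have hbeta : Complex.betaIntegral u v
      = ((∫ t in Ioo (0 : ℝ) 1, t ^ (u - 1) * (1 - t) ^ (v - 1) : ℝ) : ℂ) := by
    rw [← integral_Ioc_eq_integral_Ioo, ← intervalIntegral.integral_of_le zero_le_one,
      ← intervalIntegral.integral_ofReal, Complex.betaIntegral]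
    refine intervalIntegral.integral_congr fun t ht => ?_
    rw [uIcc_of_le zero_le_one] at ht
    simp only [Complex.ofReal_mul, Complex.ofReal_cpow ht.1, Complex.ofReal_cpow (sub_nonneg.2 ht.2)]
    push_cast
    rfl
  have h := Complex.Gamma_mul_Gamma_eq_betaIntegral (s := u) (t := v) (by simpa) (by simpa)
  rw [hbeta, ← Complex.ofReal_add, Complex.Gamma_ofReal, Complex.Gamma_ofReal, Complex.Gamma_ofReal,
    ← Complex.ofReal_mul, ← Complex.ofReal_mul, Complex.ofReal_inj] at h
  rw [h, mul_div_cancel_left₀ _ (Gamma_pos_of_pos (add_pos hu hv)).ne']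

theorem image_sq_div_one_add_sq_Ioi : (fun y : ℝ => y ^ 2 / (1 + y ^ 2)) '' Ioi 0 = Ioo 0 1 := by
  refine Subset.antisymm ?_ fun t ⟨ht0, ht1⟩ => ⟨√(t / (1 - t)), ?_, ?_⟩
  · rintro _ ⟨y, hy, rfl⟩
    have hy : 0 < y := hy
    exact ⟨by positivity, (div_lt_one (by positivity)).2 (by linarith)⟩
  · exact sqrt_pos.2 (div_pos ht0 (sub_pos.2 ht1))
  · have : 1 - t ≠ 0 := (sub_pos.2 ht1).ne'
    beta_reduce
    rw [sq_sqrt (div_pos ht0 (sub_pos.2 ht1)).le]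
    field_simp
    ring

theorem injOn_sq_div_one_add_sq : InjOn (fun y : ℝ => y ^ 2 / (1 + y ^ 2)) (Ioi 0) := by
  intro a ha b hb hab
  rw [div_eq_div_iff (by positivity) (by positivity)] at hab
  have ha : 0 < a := ha
  have hb : 0 < b := hb
  nlinarith

theorem integral_Ioi_rpow_mul_one_add_sq_rpow {u v : ℝ} (hu : 0 < u) (hv : 0 < v) :
    ∫ y in Ioi (0 : ℝ), y ^ (2 * u - 1) * (1 + y ^ 2) ^ (-(u + v))
      = Gamma u * Gamma v / (2 * Gamma (u + v)) := by
  have hderiv : ∀ y ∈ Ioi (0 : ℝ), HasDerivWithinAt (fun y : ℝ => y ^ 2 / (1 + y ^ 2))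
      (2 * y / (1 + y ^ 2) ^ 2) (Ioi 0) y := fun y _ => by
    have h := (hasDerivAt_pow 2 y).div ((hasDerivAt_pow 2 y).const_add 1) (by positivity)
    exact (h.congr_deriv (by ring)).hasDerivWithinAt
  have hjac : ∀ y ∈ Ioi (0 : ℝ), |2 * y / (1 + y ^ 2) ^ 2| •
      ((y ^ 2 / (1 + y ^ 2)) ^ (u - 1) * (1 - y ^ 2 / (1 + y ^ 2)) ^ (v - 1))
        = 2 * (y ^ (2 * u - 1) * (1 + y ^ 2) ^ (-(u + v))) := fun y (hy : 0 < y) => by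
    have hc : 0 < 1 + y ^ 2 := by positivity
    have h1 : 1 - y ^ 2 / (1 + y ^ 2) = (1 + y ^ 2)⁻¹ := by field_simp; ring
    have e1 : (y ^ 2 / (1 + y ^ 2)) ^ (u - 1) = y ^ (2 * u - 2) * (1 + y ^ 2) ^ (-(u - 1)) := by
      rw [div_rpow (by positivity) hc.le, ← rpow_natCast_mul hy.le, rpow_neg hc.le]
      push_cast; ring_nf
    have e2 : (2 * y / (1 + y ^ 2) ^ 2) = 2 * y ^ (1 : ℝ) * (1 + y ^ 2) ^ (-2 : ℝ) := by
      rw [rpow_one, rpow_neg hc.le, div_eq_mul_inv]; norm_cast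
    rw [smul_eq_mul, h1, abs_of_pos (by positivity), e1, e2, inv_rpow hc.le, ← rpow_neg hc.le]
    generalize 1 + y ^ 2 = c at hc ⊢
    rw [show 2 * u - 1 = 1 + (2 * u - 2) by ring, show -(u + v) = -2 + -(u - 1) + -(v - 1) by ring,
      rpow_add hy, rpow_add hc, rpow_add hc]
    ring
  have key := integral_image_eq_integral_abs_deriv_smul measurableSet_Ioi hderiv
    injOn_sq_div_one_add_sq (fun t => t ^ (u - 1) * (1 - t) ^ (v - 1))
  rw [image_sq_div_one_add_sq_Ioi, integral_Ioo_rpow_mul_one_sub_rpow hu hv,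
    setIntegral_congr_fun measurableSet_Ioi hjac, integral_const_mul] at key
  linear_combination -key / 2

theorem integral_one_add_norm_sq_rpow_neg {E : Type*} [NormedAddCommGroup E]
    [InnerProductSpace ℝ E] [FiniteDimensional ℝ E] [MeasurableSpace E] [BorelSpace E]
    [Nontrivial E] {s : ℝ} (hs : finrank ℝ E / 2 < s) :
    ∫ x : E, (1 + ‖x‖ ^ 2) ^ (-s)
      = π ^ (finrank ℝ E / 2 : ℝ) * Gamma (s - finrank ℝ E / 2) / Gamma s := by
  set d := finrank ℝ E with hd_def
  have hd : 0 < d := finrank_pos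
  have hu : 0 < (d : ℝ) / 2 := by positivity
  have hradial : ∫ y in Ioi (0 : ℝ), y ^ (d - 1) • (1 + y ^ 2) ^ (-s)
      = Gamma (d / 2) * Gamma (s - d / 2) / (2 * Gamma s) := by
    have h := integral_Ioi_rpow_mul_one_add_sq_rpow hu (sub_pos.2 hs)
    rw [add_sub_cancel, show 2 * ((d : ℝ) / 2) - 1 = ((d - 1 : ℕ) : ℝ) by
      rw [Nat.cast_sub hd]; ring] at h
    simpa only [rpow_natCast, smul_eq_mul] using h
  have hball : volume.real (Metric.ball (0 : E) 1) = π ^ ((d : ℝ) / 2) / Gamma (d / 2 + 1) := by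
    rw [measureReal_def, InnerProductSpace.volume_ball, ENNReal.ofReal_one, one_pow, one_mul,
      ENNReal.toReal_ofReal (by positivity), ← rpow_natCast, sqrt_eq_rpow, ← rpow_mul pi_pos.le,
      ← hd_def]
    ring_nf
  rw [integral_fun_norm_addHaar volume (fun y => (1 + y ^ 2) ^ (-s)), hball, hradial, nsmul_eq_mul,
    smul_eq_mul, Gamma_add_one hu.ne', ← hd_def]
  have := (Gamma_pos_of_pos hu).ne'
  field_simp

theorem integral_one_add_dotProduct_self_rpow_neg {ι : Type*} [Fintype ι] [Nonempty ι] {s : ℝ}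
    (hs : Fintype.card ι / 2 < s) :
    ∫ x : ι → ℝ, (1 + x ⬝ᵥ x) ^ (-s)
      = π ^ (Fintype.card ι / 2 : ℝ) * Gamma (s - Fintype.card ι / 2) / Gamma s := by
  rw [← finrank_euclideanSpace (𝕜 := ℝ)] at hs ⊢
  rw [← integral_one_add_norm_sq_rpow_neg hs,
    ← (EuclideanSpace.volume_preserving_symm_measurableEquiv_toLp ι).symm.integral_comp']
  congr with x
  rw [EuclideanSpace.norm_sq_eq]
  simp [dotProduct, sq]

theorem integral_comp_linearEquiv {E F : Type*} [NormedAddCommGroup E] [NormedSpace ℝ E]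
    [MeasurableSpace E] [BorelSpace E] [FiniteDimensional ℝ E] [NormedAddCommGroup F]
    [NormedSpace ℝ F] (μ : Measure E) [μ.IsAddHaarMeasure] (f : E ≃ₗ[ℝ] E) (g : E → F) :
    ∫ x, g (f x) ∂μ = |LinearMap.det (f : E →ₗ[ℝ] E)|⁻¹ • ∫ y, g y ∂μ := by
  have hdet : LinearMap.det (f : E →ₗ[ℝ] E) ≠ 0 := (LinearEquiv.isUnit_det' f).ne_zero
  calc ∫ x, g (f x) ∂μ = ∫ y, g y ∂(Measure.map (f : E →ₗ[ℝ] E) μ) :=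
        (integral_map_equiv f.toContinuousLinearEquiv.toHomeomorph.toMeasurableEquiv g).symm
    _ = _ := by
      rw [Measure.map_linearMap_addHaar_eq_smul_addHaar μ hdet, integral_smul_measure,
        ENNReal.toReal_ofReal (abs_nonneg _), abs_inv]

open scoped MatrixOrder in
theorem integral_comp_dotProduct_mulVec {ι F : Type*} [Fintype ι] [DecidableEq ι]
    [NormedAddCommGroup F] [NormedSpace ℝ F] {Q : Matrix ι ι ℝ} (hQ : Q.PosDef) (g : ℝ → F) :
    ∫ x : ι → ℝ, g (x ⬝ᵥ Q *ᵥ x) = (√Q.det)⁻¹ • ∫ x : ι → ℝ, g (x ⬝ᵥ x) := by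
  obtain ⟨B, hB, rfl⟩ := CStarAlgebra.isStrictlyPositive_iff_eq_star_mul_self.mp
    hQ.isStrictlyPositive
  have hBdet : IsUnit B.det := (Matrix.isUnit_iff_isUnit_det B).mp hB
  have hquad : ∀ x : ι → ℝ, x ⬝ᵥ (star B * B) *ᵥ x = (B *ᵥ x) ⬝ᵥ (B *ᵥ x) := fun x => by
    rw [star_eq_conjTranspose, conjTranspose_eq_transpose_of_trivial, ← mulVec_mulVec,
      dotProduct_mulVec, vecMul_transpose]
  have hdet : √(star B * B).det = |B.det| := by
    rw [det_mul, star_eq_conjTranspose, det_conjTranspose, star_trivial, Real.sqrt_mul_self_eq_abs]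
  simp_rw [hquad, hdet]
  let := B.invertibleOfIsUnitDet hBdet
  have := integral_comp_linearEquiv volume (B.toLinearEquiv' this) (fun y => g (y ⬝ᵥ y))
  rwa [toLinearEquiv'_apply, LinearMap.det_toLin'] at this

theorem one_add_inv_mul_dotProduct_inv_mulVec_pos {ι : Type*} [Fintype ι] [DecidableEq ι]
    {ν : ℝ} (hν : 0 < ν) {S : Matrix ι ι ℝ} (hS : S.PosDef) (x : ι → ℝ) :
    0 < 1 + ν⁻¹ * (x ⬝ᵥ S⁻¹ *ᵥ x) := by
  have := hS.inv.posSemidef.dotProduct_mulVec_nonneg x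
  simp only [star_trivial] at this
  positivity

theorem integral_studentDensity {d : ℕ} [NeZero d] {ν : ℝ} (hν : 0 < ν) (μ : Fin d → ℝ)
    {S : Matrix (Fin d) (Fin d) ℝ} (hS : S.PosDef) :
    ∫ x, studentDensity d ν μ S x = 1 := by
  have hQ : (ν⁻¹ • S⁻¹).PosDef := hS.inv.smul (inv_pos.2 hν)
  have hdetS := hS.det_pos
  have hdetQ : √(ν⁻¹ • S⁻¹).det = (√(ν ^ d * S.det))⁻¹ := by
    rw [det_smul, det_nonsing_inv, Ring.inverse_eq_inv', Fintype.card_fin, inv_pow, ← mul_inv,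
      sqrt_inv]
  have hsqrt : √(ν ^ d * S.det) = ν ^ ((d : ℝ) / 2) * S.det ^ ((1 : ℝ) / 2) := by
    rw [sqrt_mul (by positivity), sqrt_eq_rpow, sqrt_eq_rpow, ← rpow_natCast, ← rpow_mul hν.le]
    ring_nf
  have hkernel : ∫ x : Fin d → ℝ, (1 + ν⁻¹ * ((x - μ) ⬝ᵥ S⁻¹ *ᵥ (x - μ))) ^ (-((ν + d) / 2))
      = √(ν ^ d * S.det) * (π ^ ((d : ℝ) / 2) * Gamma (ν / 2) / Gamma ((ν + d) / 2)) := by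
    simp_rw [← smul_eq_mul (a := ν⁻¹), ← dotProduct_smul, ← smul_mulVec]
    rw [integral_sub_right_eq_self (fun x => (1 + x ⬝ᵥ (ν⁻¹ • S⁻¹) *ᵥ x) ^ (-((ν + d) / 2))),
      integral_comp_dotProduct_mulVec hQ (fun t => (1 + t) ^ (-((ν + d) / 2))),
      integral_one_add_dotProduct_self_rpow_neg (by simp; linarith), hdetQ, inv_inv, smul_eq_mul,
      Fintype.card_fin]
    ring_nf
  simp only [studentDensity]
  rw [integral_const_mul, hkernel, hsqrt, show -(1 : ℝ) / 2 = -(1 / 2) by ring, rpow_neg hdetS.le]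
  field_simp

theorem studentDensity_rpow_eq_const_mul {d : ℕ} {νp να α : ℝ} (hνp : 0 < νp) (hνα : 0 < να)
    (μ : Fin d → ℝ) {S : Matrix (Fin d) (Fin d) ℝ} (hS : S.PosDef)
    (hexp : (νp + d) * α = να + d) :
    ∃ c ≠ 0, ∀ x, studentDensity d νp μ S x ^ α = c * studentDensity d να μ ((νp / να) • S) x := by
  have hdetS := hS.det_pos
  have hc : 0 < νp / να := div_pos hνp hνα
  set b := fun x : Fin d → ℝ => 1 + νp⁻¹ * ((x - μ) ⬝ᵥ S⁻¹ *ᵥ (x - μ))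
  have hb x : 0 < b x := one_add_inv_mul_dotProduct_inv_mulVec_pos hνp hS (x - μ)
  have hkernel x : 1 + να⁻¹ * ((x - μ) ⬝ᵥ ((νp / να) • S)⁻¹ *ᵥ (x - μ)) = b x := by
    let := invertibleOfNonzero hc.ne'
    rw [Matrix.inv_smul _ _ (isUnit_iff_ne_zero.2 hdetS.ne'), invOf_eq_inv]
    simp only [smul_mulVec, dotProduct_smul, smul_eq_mul, b]
    field_simp
  set Kp := Gamma ((νp + d) / 2) / (Gamma (νp / 2) * νp ^ ((d : ℝ) / 2) * π ^ ((d : ℝ) / 2))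
    * S.det ^ (-(1 : ℝ) / 2)
  set Kα := Gamma ((να + d) / 2) / (Gamma (να / 2) * να ^ ((d : ℝ) / 2) * π ^ ((d : ℝ) / 2))
    * ((νp / να) • S).det ^ (-(1 : ℝ) / 2)
  have hKp : 0 < Kp := by positivity
  have hKα : 0 < Kα := by
    have : 0 < ((νp / να) • S).det := by rw [det_smul]; positivity
    positivity
  refine ⟨Kp ^ α / Kα, (div_pos (rpow_pos_of_pos hKp α) hKα).ne', fun x => ?_⟩
  have hp : studentDensity d νp μ S x ^ α = Kp ^ α * b x ^ (-((να + d) / 2)) := by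
    rw [studentDensity, mul_rpow hKp.le (rpow_nonneg (hb x).le _), ← rpow_mul (hb x).le]
    congr 2
    linear_combination -hexp / 2
  have hq : studentDensity d να μ ((νp / να) • S) x = Kα * b x ^ (-((να + d) / 2)) := by
    rw [studentDensity, hkernel]
  rw [hp, hq]
  field_simp

/-- Proposition 4: the escort `p^{(α)} ∝ p^α` of a Student density with `ν_p` degrees
of freedom, for `α = 1 + 2/(ν+d)`, is again a Student density with
`ν^{(α)} = ν_p + 2(ν_p+d)/(ν+d)` degrees of freedom, the same location, and shape
`(ν_p/ν^{(α)}) Σ_p`. -/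
theorem escort_student_is_student (d : ℕ) (hd : 1 ≤ d) (νp ν : ℝ) (hνp : 0 < νp) (hν : 0 < ν)
    (μ : Fin d → ℝ) (S : Matrix (Fin d) (Fin d) ℝ) (hS : S.PosDef)
    (α να : ℝ) (hα : α = 1 + 2 / (ν + d)) (hνα : να = νp + 2 * (νp + d) / (ν + d)) :
    ∀ x, (studentDensity d νp μ S x) ^ α / (∫ y, (studentDensity d νp μ S y) ^ α)
      = studentDensity d να μ ((νp / να) • S) x := by
  have : NeZero d := ⟨by omega⟩
  have hνα_pos : 0 < να := by rw [hνα]; positivity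
  have hexp : (νp + d) * α = να + d := by
    rw [hα, hνα]
    field_simp
    ring
  obtain ⟨c, hc, hescort⟩ := studentDensity_rpow_eq_const_mul hνp hνα_pos μ hS hexp
  have hnorm := integral_studentDensity hνα_pos μ (hS.smul (div_pos hνp hνα_pos))
  intro x
  simp_rw [hescort]
  rw [integral_const_mul, hnorm, mul_one, mul_div_cancel_left₀ _ hc]
end

section
/- Let ϑ ∈ ℝ^d × S_{--}^d be a natural parameter of the Student family with 2(ν+d) + ϑ₁ᵀϑ₂⁻¹ϑ₁ > 0, corresponding to (μ, Σ) ∈ ℝ^d × S_{++}^d, with λ = −2/(ν+d) and T(x) = (x, xxᵀ). Then for any pair η = (m, M) ∈ ℝ^d × S^d with M − mmᵀ positive semidefinite (the escort moments of a compatible density), 1 + λ⟨ϑ, η⟩ = (ν + (μ−m)ᵀΣ⁻¹(μ−m) + tr(Σ⁻¹(M − mmᵀ)))/(ν + μᵀΣ⁻¹μ) ≥ ν/(ν + μᵀΣ⁻¹μ) > 0, so c_λ(ϑ, η) is a finite real number. -/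
/-!
Both coordinates of `ϑ` are multiples of `Σ⁻¹`, so `1 + λ⟨ϑ, η⟩` is an affine expression in
`mᵀΣ⁻¹μ` and `tr(Σ⁻¹M)` over the denominator `ν + μᵀΣ⁻¹μ`. Completing the square,
`μᵀΣ⁻¹μ − 2 mᵀΣ⁻¹μ = (μ − m)ᵀΣ⁻¹(μ − m) − mᵀΣ⁻¹m`, and `mᵀΣ⁻¹m` is absorbed into the trace as
`tr(Σ⁻¹ m mᵀ)`. The bounds follow because `Σ⁻¹` is positive definite: its quadratic form is
nonnegative, and so is `tr(Σ⁻¹ B)` for `B = C*C` positive semidefinite, being `tr(C Σ⁻¹ C*)`.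
-/

open Matrix
open scoped MatrixOrder ComplexOrder

theorem Matrix.PosSemidef.trace_mul_nonneg {𝕜 n : Type*} [RCLike 𝕜] [Fintype n]
    {A B : Matrix n n 𝕜} (hA : A.PosSemidef) (hB : B.PosSemidef) : 0 ≤ (A * B).trace := by
  classical
  obtain ⟨C, rfl⟩ := CStarAlgebra.nonneg_iff_eq_star_mul_self.mp hB.nonneg
  rw [← Matrix.mul_assoc, trace_mul_cycle, star_eq_conjTranspose]
  exact (hA.mul_mul_conjTranspose_same C).trace_nonneg

theorem Matrix.IsSymm.dotProduct_mulVec_sub_sub {R n : Type*} [CommRing R] [Fintype n]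
    {A : Matrix n n R} (hA : A.IsSymm) (x y : n → R) :
    (x - y) ⬝ᵥ A *ᵥ (x - y) = x ⬝ᵥ A *ᵥ x - 2 * (A *ᵥ x ⬝ᵥ y) + y ⬝ᵥ A *ᵥ y := by
  have hyx : y ⬝ᵥ A *ᵥ x = A *ᵥ x ⬝ᵥ y := dotProduct_comm _ _
  have hxy : x ⬝ᵥ A *ᵥ y = A *ᵥ x ⬝ᵥ y := by
    rw [dotProduct_mulVec, ← mulVec_transpose, hA.eq, dotProduct_comm]
  simp only [mulVec_sub, sub_dotProduct, dotProduct_sub, hxy, hyx]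
  ring

theorem Matrix.trace_mul_sub_vecMulVec_self {R n : Type*} [CommRing R] [Fintype n]
    (A M : Matrix n n R) (x : n → R) :
    (A * (M - vecMulVec x x)).trace = (A * M).trace - x ⬝ᵥ A *ᵥ x := by
  rw [Matrix.mul_sub, trace_sub, mul_vecMulVec, trace_vecMulVec, dotProduct_comm]

theorem one_add_student_pairing_eq {R n : Type*} [Field R] [CharZero R] [Fintype n]
    {A : Matrix n n R} (hA : A.IsSymm) (M : Matrix n n R) (μ m : n → R) {ν k : R}
    (hk : k ≠ 0) (hc : ν + μ ⬝ᵥ A *ᵥ μ ≠ 0) :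
    1 + -2 / k * (((k / (ν + μ ⬝ᵥ A *ᵥ μ)) • A *ᵥ μ) ⬝ᵥ m
        + ((-(k / (2 * (ν + μ ⬝ᵥ A *ᵥ μ)))) • A * M).trace)
      = (ν + (μ - m) ⬝ᵥ A *ᵥ (μ - m) + (A * (M - vecMulVec m m)).trace)
          / (ν + μ ⬝ᵥ A *ᵥ μ) := by
  rw [hA.dotProduct_mulVec_sub_sub, trace_mul_sub_vecMulVec_self, smul_dotProduct,
    Matrix.smul_mul, trace_smul, smul_eq_mul, smul_eq_mul]
  field_simp
  ring

/-- Proof computation of Proposition 3(iii): for the Student natural parameters `ϑ`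
associated to `(μ, Σ)`, `λ = −2/(ν+d)`, and escort moments `η = (m, M)` with
`M − mmᵀ` positive semidefinite,
`1 + λ⟨ϑ, η⟩ = (ν + (μ−m)ᵀΣ⁻¹(μ−m) + tr(Σ⁻¹(M − mmᵀ)))/(ν + μᵀΣ⁻¹μ)
            ≥ ν/(ν + μᵀΣ⁻¹μ) > 0`,
so `c_λ(ϑ, η)` is a finite real number. -/
theorem student_coupling_escort_moments_pos (d : ℕ) (ν : ℝ) (hν : 0 < ν)
    (lam : ℝ) (hlam : lam = -2 / (ν + d))
    (μ m : Fin d → ℝ) (S M : Matrix (Fin d) (Fin d) ℝ) (hS : S.PosDef)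
    (hM : (M - vecMulVec m m).PosSemidef)
    (t1 : Fin d → ℝ) (t2 : Matrix (Fin d) (Fin d) ℝ)
    (ht1 : t1 = ((ν + d) / (ν + μ ⬝ᵥ S⁻¹.mulVec μ)) • S⁻¹.mulVec μ)
    (ht2 : t2 = (-((ν + d) / (2 * (ν + μ ⬝ᵥ S⁻¹.mulVec μ)))) • S⁻¹) :
    1 + lam * (t1 ⬝ᵥ m + (t2 * M).trace)
        = (ν + (μ - m) ⬝ᵥ S⁻¹.mulVec (μ - m) + (S⁻¹ * (M - vecMulVec m m)).trace)
            / (ν + μ ⬝ᵥ S⁻¹.mulVec μ)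
    ∧ ν / (ν + μ ⬝ᵥ S⁻¹.mulVec μ) ≤ 1 + lam * (t1 ⬝ᵥ m + (t2 * M).trace)
    ∧ 0 < 1 + lam * (t1 ⬝ᵥ m + (t2 * M).trace) := by
  have hinv : S⁻¹.PosSemidef := hS.inv.posSemidef
  have hquad : ∀ x, 0 ≤ x ⬝ᵥ S⁻¹ *ᵥ x := fun x => by
    simpa using hinv.dotProduct_mulVec_nonneg x
  have hden : 0 < ν + μ ⬝ᵥ S⁻¹ *ᵥ μ := by linarith [hquad μ]
  have htr : 0 ≤ (S⁻¹ * (M - vecMulVec m m)).trace := hinv.trace_mul_nonneg hM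
  have heq := one_add_student_pairing_eq (isHermitian_iff_isSymm.mp hinv.isHermitian) M μ m
    (k := ν + d) (by positivity) hden.ne'
  subst hlam ht1 ht2
  refine ⟨heq, ?_, ?_⟩ <;> rw [heq]
  · gcongr
    linarith [hquad (μ - m)]
  · exact div_pos (by linarith [hquad (μ - m)]) hden
end
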